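/- arXiv:2006.15661 — 2 statements merged into one kernel-verified Lean document; each statement's English description precedes it below -/
import Mathlib

section
/- Let ℓ be a positive even integer and define E_ℓ(t) = ∑_{s=0}^{ℓ} t^s/s! for real t. Then: (1) E_ℓ(t) > 0 for all real t; (2) E_ℓ(t) ≥ 1 for all t ≥ 0; and (3) for all real t ≤ ℓ/e², one has e^t ≤ (1 + e^{−ℓ/2})·E_ℓ(t). -/
/-!
`E_l(t) e^{-t}` has derivative `-(t^l / l!) e^{-t}`, which is nonpositive for even `l`; comparing
with the value `1` at `t = 0` gives `e^t ≤ E_l(t)` for `t ≤ 0`. For `t ≥ 0`, adding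
`t^{l+1} / (l+1)!` makes the derivative nonnegative, so `e^t (1 - t^{l+1} / (l+1)!) ≤ E_l(t)`.
When `t ≤ l / e²`, the bound `n^n / n! ≤ e^n` makes this remainder at most `e^{-(l+1)}`, which the
factor `1 + e^{-l/2}` absorbs.
-/

noncomputable section

def Epoly (l : ℕ) (t : ℝ) : ℝ := ∑ i ∈ Finset.range (l + 1), t ^ i / (Nat.factorial i : ℝ)

open Real Nat Set

lemma hasDerivAt_pow_succ_div_factorial (l : ℕ) (x : ℝ) :
    HasDerivAt (fun y : ℝ => y ^ (l + 1) / (l + 1)!) (x ^ l / l !) x := by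
  refine ((hasDerivAt_pow (l + 1) x).div_const ((l + 1)! : ℝ)).congr_deriv ?_
  push_cast [factorial_succ]
  field_simp

lemma pow_succ_div_factorial_le_exp_neg_one_pow {l : ℕ} {t : ℝ} (ht0 : 0 ≤ t)
    (ht : t ≤ l / exp 1 ^ 2) : t ^ (l + 1) / (l + 1)! ≤ exp (-1) ^ (l + 1) := by
  have hn : (0 : ℝ) < l + 1 := by positivity
  have hfact : ((l + 1 : ℕ) : ℝ) ^ (l + 1) / (l + 1)! ≤ exp 1 ^ (l + 1) := by
    rw [← exp_nat_mul, mul_one]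
    exact pow_div_factorial_le_exp _ (Nat.cast_nonneg _) _
  have hbase : t * exp 1 / (l + 1) ≤ exp (-1) := by
    rw [div_le_iff₀ hn, exp_neg, inv_mul_eq_div, le_div_iff₀ (exp_pos 1)]
    rw [le_div_iff₀ (by positivity)] at ht
    linarith
  calc t ^ (l + 1) / (l + 1)!
      = (t / (l + 1)) ^ (l + 1) * (((l + 1 : ℕ) : ℝ) ^ (l + 1) / (l + 1)!) := by
        push_cast; rw [div_pow]; field_simp
    _ ≤ (t / (l + 1)) ^ (l + 1) * exp 1 ^ (l + 1) := by gcongr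
    _ = (t * exp 1 / (l + 1)) ^ (l + 1) := by rw [← mul_pow]; ring
    _ ≤ exp (-1) ^ (l + 1) := by gcongr

namespace Epoly

lemma zero_right (l : ℕ) : Epoly l 0 = 1 := by
  simp [Epoly, Finset.sum_range_succ', zero_pow_eq]

lemma succ_left (l : ℕ) (t : ℝ) : Epoly (l + 1) t = Epoly l t + t ^ (l + 1) / (l + 1)! := by
  simp only [Epoly, Finset.sum_range_succ (n := l + 1)]

lemma hasDerivAt (l : ℕ) (x : ℝ) : HasDerivAt (Epoly l) (Epoly l x - x ^ l / l !) x := by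
  induction l with
  | zero =>
    have h0 : Epoly 0 = fun _ => 1 := funext fun y => by simp [Epoly]
    simpa [h0] using hasDerivAt_const x (1 : ℝ)
  | succ l ih =>
    rw [show Epoly (l + 1) = fun y => Epoly l y + y ^ (l + 1) / (l + 1)! from funext (succ_left l)]
    exact (ih.add (hasDerivAt_pow_succ_div_factorial l x)).congr_deriv (by beta_reduce; ring)

lemma hasDerivAt_mul_exp_neg (l : ℕ) (x : ℝ) :
    HasDerivAt (fun y => Epoly l y * exp (-y)) (-(x ^ l / l !) * exp (-x)) x :=
  ((hasDerivAt l x).mul (hasDerivAt_neg x).exp).congr_deriv (by ring)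

lemma one_le (l : ℕ) {t : ℝ} (ht : 0 ≤ t) : 1 ≤ Epoly l t := by
  simpa [Epoly] using Finset.single_le_sum (f := fun i => t ^ i / (i ! : ℝ))
    (fun i _ => by positivity) (Finset.mem_range.2 l.succ_pos)

lemma exp_le_of_nonpos {l : ℕ} (hl : Even l) {t : ℝ} (ht : t ≤ 0) : exp t ≤ Epoly l t := by
  have hanti : Antitone fun y => Epoly l y * exp (-y) :=
    antitone_of_hasDerivAt_nonpos (hasDerivAt_mul_exp_neg l) fun x => by
      have := hl.pow_nonneg x
      have := exp_pos (-x)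
      simp only [Pi.zero_apply, neg_mul, Left.neg_nonpos_iff]
      positivity
  have h : Epoly l 0 * exp (-0) ≤ Epoly l t * exp (-t) := hanti ht
  rw [zero_right, neg_zero, exp_zero, mul_one, exp_neg, ← div_eq_mul_inv,
    one_le_div (exp_pos t)] at h
  exact h

lemma exp_mul_one_sub_le {l : ℕ} {t : ℝ} (ht : 0 ≤ t) :
    exp t * (1 - t ^ (l + 1) / (l + 1)!) ≤ Epoly l t := by
  set u : ℝ → ℝ := fun y => y ^ (l + 1) / (l + 1)!
  have hmono : MonotoneOn (fun y => Epoly l y * exp (-y) + u y) (Ici 0) := by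
    have hderiv (x : ℝ) : HasDerivAt (fun y => Epoly l y * exp (-y) + u y)
        (x ^ l / l ! * (1 - exp (-x))) x :=
      ((hasDerivAt_mul_exp_neg l x).add (hasDerivAt_pow_succ_div_factorial l x)).congr_deriv
        (by ring)
    refine monotoneOn_of_hasDerivWithinAt_nonneg (convex_Ici 0)
      (fun x _ => (hderiv x).continuousAt.continuousWithinAt)
      (fun x _ => (hderiv x).hasDerivWithinAt) fun x hx => ?_
    rw [interior_Ici, mem_Ioi] at hx
    have : exp (-x) ≤ 1 := exp_le_one_iff.2 (by linarith)
    have : 0 ≤ 1 - exp (-x) := by linarith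
    positivity
  have h : Epoly l 0 * exp (-0) + u 0 ≤ Epoly l t * exp (-t) + u t :=
    hmono self_mem_Ici ht ht
  simp only [u, zero_right, neg_zero, exp_zero, mul_one, zero_pow (succ_ne_zero l), zero_div,
    add_zero] at h
  calc exp t * (1 - u t) ≤ exp t * (Epoly l t * exp (-t)) := by gcongr; linarith
    _ = Epoly l t := by rw [mul_left_comm, ← exp_add, add_neg_cancel, exp_zero, mul_one]

lemma exp_le_one_add_exp_neg_half_mul {l : ℕ} {t : ℝ} (ht0 : 0 ≤ t)
    (ht : t ≤ l / exp 1 ^ 2) : exp t ≤ (1 + exp (-l / 2)) * Epoly l t := by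
  set a := exp (-l / 2)
  set u := t ^ (l + 1) / (l + 1)!
  have hu : u ≤ a ^ 2 * exp (-1) := by
    convert pow_succ_div_factorial_le_exp_neg_one_pow ht0 ht using 1
    rw [← exp_nat_mul, ← exp_nat_mul, ← exp_add]
    push_cast
    ring_nf
  have ha0 : 0 < a := exp_pos _
  have ha1 : a ≤ 1 := exp_le_one_iff.2 (by have := l.cast_nonneg (α := ℝ); linarith)
  have he : exp (-1) * (1 + a) ≤ 1 := by nlinarith [exp_neg_one_lt_half, exp_pos (-1)]
  have hrem : u * (1 + a) ≤ a :=
    calc u * (1 + a) ≤ a ^ 2 * exp (-1) * (1 + a) := by gcongr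
      _ ≤ a ^ 2 := by rw [mul_assoc]; exact mul_le_of_le_one_right (by positivity) he
      _ ≤ a := by nlinarith
  calc exp t ≤ (1 + a) * (exp t * (1 - u)) := by
        nlinarith [mul_le_mul_of_nonneg_left hrem (exp_pos t).le]
    _ ≤ (1 + a) * Epoly l t := by gcongr; exact exp_mul_one_sub_le ht0

end Epoly

theorem statement7_general (l : ℕ) (heven : Even l) :
    (∀ t : ℝ, 0 < Epoly l t) ∧
    (∀ t : ℝ, 0 ≤ t → 1 ≤ Epoly l t) ∧
    (∀ t : ℝ, t ≤ (l : ℝ) / Real.exp 1 ^ 2 →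
      Real.exp t ≤ (1 + Real.exp (-(l : ℝ) / 2)) * Epoly l t) := by
  have hpos (t : ℝ) : 0 < Epoly l t := by
    rcases le_total t 0 with ht | ht
    · exact (exp_pos t).trans_le (Epoly.exp_le_of_nonpos heven ht)
    · exact one_pos.trans_le (Epoly.one_le l ht)
  refine ⟨hpos, fun t => Epoly.one_le l, fun t ht => ?_⟩
  rcases le_total t 0 with ht0 | ht0
  · calc exp t ≤ Epoly l t := Epoly.exp_le_of_nonpos heven ht0
      _ ≤ (1 + exp (-l / 2)) * Epoly l t :=
        le_mul_of_one_le_left (hpos t).le (le_add_of_nonneg_right (exp_pos _).le)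
  · exact Epoly.exp_le_one_add_exp_neg_half_mul ht0 ht

/-- For ℓ a positive even integer:
(1) E_ℓ(t) > 0 for all real t; (2) E_ℓ(t) ≥ 1 for all t ≥ 0;
(3) for all real t ≤ ℓ/e², one has e^t ≤ (1 + e^{-ℓ/2})·E_ℓ(t). -/
theorem statement7 (l : ℕ) (hpos : 0 < l) (heven : Even l) :
    (∀ t : ℝ, 0 < Epoly l t) ∧
    (∀ t : ℝ, 0 ≤ t → 1 ≤ Epoly l t) ∧
    (∀ t : ℝ, t ≤ (l : ℝ) / Real.exp 1 ^ 2 →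
      Real.exp t ≤ (1 + Real.exp (-(l : ℝ) / 2)) * Epoly l t) :=
  statement7_general l heven
end
end

section
/- For every nonnegative integer α, ∑_{i,j,k ≥ 0, 2i + 3j + 3k = α} 1/( i!·j!·k!·3^{j+k} ) ≤ 2·(5/3)^{α/3} / ⌊α/3⌋! . -/
/-!
The sum is the coefficient `a α` of `x ^ α` in
`exp (x ^ 2 + 2 * x ^ 3 / 3) = e ^ (x ^ 2) * (e ^ (x ^ 3 / 3)) ^ 2`.
Comparing coefficients in `f' = (2 * x + 2 * x ^ 2) * f` gives
`(α + 3) * a (α + 3) = 2 * a (α + 1) + 2 * a α`, and the bound follows by strong induction: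
with `m = ⌊α / 3⌋` and `r = (5 / 3) ^ (α / 3)`, the right-hand side is at most
`4 * r * ((5 / 3) ^ (1 / 3) + 1) / m! ≤ 10 * r / m!` since `(5 / 3) ^ (1 / 3) ≤ 3 / 2`,
while `α + 3 ≥ 3 * (m + 1)`.
-/

open Finset Nat

noncomputable def summand (α i j k : ℕ) : ℝ :=
  if 2 * i + 3 * j + 3 * k = α then ((i ! : ℝ) * j ! * k ! * 3 ^ (j + k))⁻¹ else 0

noncomputable def expCoeff (α : ℕ) : ℝ :=
  ∑ i ∈ range (α + 1), ∑ j ∈ range (α + 1), ∑ k ∈ range (α + 1), summand α i j k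

lemma natCast_mul_summand (α i j k : ℕ) :
    (α : ℝ) * summand α i j k = (2 * i + 3 * j + 3 * k) * summand α i j k := by
  unfold summand
  split_ifs with h
  · rw [← h]; push_cast; ring
  · simp

lemma summand_eq_zero_of_lt {α i j k : ℕ} (h : α < i ∨ α < j ∨ α < k) : summand α i j k = 0 :=
  if_neg (by omega)

lemma succ_mul_summand_succ_fst (α i j k : ℕ) :
    ((i : ℝ) + 1) * summand (α + 2) (i + 1) j k = summand α i j k := by
  unfold summand
  split_ifs <;> try omega
  · rw [factorial_succ]; push_cast; field_simp
  · simp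

lemma three_mul_succ_mul_summand_succ_snd (α i j k : ℕ) :
    3 * ((j : ℝ) + 1) * summand (α + 3) i (j + 1) k = summand α i j k := by
  unfold summand
  split_ifs <;> try omega
  · rw [factorial_succ, add_right_comm j 1 k, pow_succ]; push_cast; field_simp
  · simp

lemma three_mul_succ_mul_summand_succ_thd (α i j k : ℕ) :
    3 * ((k : ℝ) + 1) * summand (α + 3) i j (k + 1) = summand α i j k := by
  unfold summand
  split_ifs <;> try omega
  · rw [factorial_succ, ← add_assoc, pow_succ]; push_cast; field_simp
  · simp

lemma sum_range_summand_eq_expCoeff {α N₁ N₂ N₃ : ℕ} (h₁ : α < N₁) (h₂ : α < N₂) (h₃ : α < N₃) :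
    ∑ i ∈ range N₁, ∑ j ∈ range N₂, ∑ k ∈ range N₃, summand α i j k = expCoeff α := by
  have vanish {N : ℕ} (f : ℕ → ℝ) (hN : α < N) (hf : ∀ i, α < i → f i = 0) :
      ∑ i ∈ range N, f i = ∑ i ∈ range (α + 1), f i :=
    (sum_subset (range_subset_range.mpr hN) fun i _ hi ↦ hf i (by simp at hi; omega)).symm
  rw [vanish _ h₁ fun i hi ↦ sum_eq_zero fun j _ ↦ sum_eq_zero fun k _ ↦
    summand_eq_zero_of_lt (.inl hi)]
  refine sum_congr rfl fun i _ ↦ ?_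
  rw [vanish _ h₂ fun j hj ↦ sum_eq_zero fun k _ ↦ summand_eq_zero_of_lt (.inr (.inl hj))]
  exact sum_congr rfl fun j _ ↦ vanish _ h₃ fun k hk ↦ summand_eq_zero_of_lt (.inr (.inr hk))

lemma expCoeff_recurrence (α : ℕ) :
    ((α : ℝ) + 3) * expCoeff (α + 3) = 2 * expCoeff (α + 1) + 2 * expCoeff α := by
  have h_fst : ∑ i ∈ range (α + 4), ∑ j ∈ range (α + 4), ∑ k ∈ range (α + 4),
      (i : ℝ) * summand (α + 3) i j k = expCoeff (α + 1) := by
    rw [sum_range_succ']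
    simp only [Nat.cast_zero, zero_mul, sum_const_zero, add_zero, Nat.cast_succ]
    simp only [show α + 3 = α + 1 + 2 from rfl, succ_mul_summand_succ_fst]
    exact sum_range_summand_eq_expCoeff (by omega) (by omega) (by omega)
  have h_snd : ∑ i ∈ range (α + 4), ∑ j ∈ range (α + 4), ∑ k ∈ range (α + 4),
      3 * (j : ℝ) * summand (α + 3) i j k = expCoeff α := by
    rw [← sum_range_summand_eq_expCoeff (α := α) (N₁ := α + 4) (N₂ := α + 3) (N₃ := α + 4)
      (by omega) (by omega) (by omega)]
    refine sum_congr rfl fun i _ ↦ ?_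
    rw [sum_range_succ']
    simp only [Nat.cast_zero, mul_zero, zero_mul, sum_const_zero, add_zero, Nat.cast_succ,
      three_mul_succ_mul_summand_succ_snd]
  have h_thd : ∑ i ∈ range (α + 4), ∑ j ∈ range (α + 4), ∑ k ∈ range (α + 4),
      3 * (k : ℝ) * summand (α + 3) i j k = expCoeff α := by
    rw [← sum_range_summand_eq_expCoeff (α := α) (N₁ := α + 4) (N₂ := α + 4) (N₃ := α + 3)
      (by omega) (by omega) (by omega)]
    refine sum_congr rfl fun i _ ↦ sum_congr rfl fun j _ ↦ ?_
    rw [sum_range_succ']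
    simp only [Nat.cast_zero, mul_zero, zero_mul, add_zero, Nat.cast_succ,
      three_mul_succ_mul_summand_succ_thd]
  calc ((α : ℝ) + 3) * expCoeff (α + 3)
      = ∑ i ∈ range (α + 4), ∑ j ∈ range (α + 4), ∑ k ∈ range (α + 4),
          (2 * ((i : ℝ) * summand (α + 3) i j k) + 3 * (j : ℝ) * summand (α + 3) i j k
            + 3 * (k : ℝ) * summand (α + 3) i j k) := by
        simp only [expCoeff, mul_sum]
        refine sum_congr rfl fun i _ ↦ sum_congr rfl fun j _ ↦ sum_congr rfl fun k _ ↦ ?_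
        rw [show (α : ℝ) + 3 = ((α + 3 : ℕ) : ℝ) by push_cast; rfl, natCast_mul_summand]
        ring
    _ = 2 * expCoeff (α + 1) + expCoeff α + expCoeff α := by
        rw [← h_fst]
        nth_rw 2 [← h_thd]
        rw [← h_snd]
        simp only [mul_sum, sum_add_distrib]
    _ = 2 * expCoeff (α + 1) + 2 * expCoeff α := by ring

lemma cbrt_five_thirds_le : (5 / 3 : ℝ) ^ ((1 : ℝ) / 3) ≤ 3 / 2 := by
  rw [← pow_le_pow_iff_left₀ (by positivity) (by norm_num) three_ne_zero,
    ← Real.rpow_natCast, ← Real.rpow_mul (by norm_num)]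
  norm_num

lemma expCoeff_le : ∀ α : ℕ,
    expCoeff α ≤ 2 * (5 / 3 : ℝ) ^ ((α : ℝ) / 3) / (α / 3)!
  | 0 => by norm_num [expCoeff, summand]
  | 1 => by norm_num [expCoeff, summand, sum_range_succ]; positivity
  | 2 => by
    norm_num [expCoeff, summand, sum_range_succ]
    have : (1 : ℝ) ≤ (5 / 3 : ℝ) ^ ((2 : ℝ) / 3) := Real.one_le_rpow (by norm_num) (by norm_num)
    linarith
  | α + 3 => by
    set r := (5 / 3 : ℝ) ^ ((α : ℝ) / 3)
    set c := (5 / 3 : ℝ) ^ ((1 : ℝ) / 3)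
    set m := α / 3
    have h_pow_succ : (5 / 3 : ℝ) ^ (((α + 1 : ℕ) : ℝ) / 3) = r * c := by
      rw [← Real.rpow_add (by norm_num)]; push_cast; ring_nf
    have h_pow_add_three : (5 / 3 : ℝ) ^ (((α + 3 : ℕ) : ℝ) / 3) = r * (5 / 3) := by
      rw [show (((α + 3 : ℕ) : ℝ) / 3) = (α : ℝ) / 3 + 1 by push_cast; ring,
        Real.rpow_add (by norm_num), Real.rpow_one]
    have h_fac : (m ! : ℝ) ≤ ((α + 1) / 3)! := by
      exact_mod_cast factorial_le (Nat.div_le_div_right (by omega))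
    have h_succ : expCoeff (α + 1) ≤ 2 * (r * c) / m ! := by
      refine (expCoeff_le (α + 1)).trans ?_
      rw [h_pow_succ]
      gcongr
    have h_div : (α + 3) / 3 = m + 1 := by omega
    have h_three_mul : 3 * ((m : ℝ) + 1) ≤ α + 3 := by
      exact_mod_cast (show 3 * (m + 1) ≤ α + 3 by omega)
    rw [h_pow_add_three, h_div, factorial_succ]
    refine le_of_mul_le_mul_left ?_ (by positivity : (0 : ℝ) < α + 3)
    push_cast
    calc ((α : ℝ) + 3) * expCoeff (α + 3)
        = 2 * expCoeff (α + 1) + 2 * expCoeff α := expCoeff_recurrence α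
      _ ≤ 2 * (2 * (r * c) / m !) + 2 * (2 * r / m !) := by gcongr; exact expCoeff_le α
      _ = 4 * (r / m !) * (c + 1) := by ring
      _ ≤ 4 * (r / m !) * (5 / 2) := by gcongr; linarith [cbrt_five_thirds_le]
      _ = 3 * ((m : ℝ) + 1) * (2 * (r * (5 / 3)) / ((m + 1) * m !)) := by field_simp; ring
      _ ≤ ((α : ℝ) + 3) * (2 * (r * (5 / 3)) / ((m + 1) * m !)) := by gcongr

/-- For every nonnegative integer α,
∑_{i,j,k ≥ 0, 2i+3j+3k = α} 1/(i!·j!·k!·3^{j+k}) ≤ 2·(5/3)^{α/3}/⌊α/3⌋! . -/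
theorem statement19 (α : ℕ) :
    ∑ i ∈ Finset.range (α + 1), ∑ j ∈ Finset.range (α + 1), ∑ k ∈ Finset.range (α + 1),
      (if 2 * i + 3 * j + 3 * k = α then
        ((Nat.factorial i : ℝ) * (Nat.factorial j : ℝ) * (Nat.factorial k : ℝ) *
          (3 : ℝ) ^ (j + k))⁻¹ else 0)
      ≤ 2 * (5 / 3 : ℝ) ^ ((α : ℝ) / 3) / (Nat.factorial (α / 3) : ℝ) :=
  expCoeff_le α
end
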